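/- arXiv:1407.4852 — 4 statements merged into one kernel-verified Lean document; each statement's English description precedes it below -/
import Mathlib

section
/- Let n ≥ 5 and let p(s) = s^n + α1·s^{n-1} + ... + αn be a monic real polynomial, with the convention αk = 0 for k > n. If α5 - α1·α4 ≥ 0 and α7 - α1·α6 ≥ 0, then p is Hurwitz unstable, i.e., p has a complex root with nonnegative real part. -/
/-!
A monic Hurwitz-stable real polynomial is a product of factors `s + b` and `s² + c s + d` with
`b, c, d > 0`. Writing `aₖ` for the coefficient of `s ^ (n - k)`, multiplying by such a factor
keeps the coefficients positive and preserves `a₃ ≤ a₁ a₂` and `a₅ ≤ a₁ a₄`; the latter becomes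
strict as soon as the degree reaches 5, because the product gains the term `c² a₃`. Hence a stable
polynomial of degree `≥ 5` has `α₅ < α₁ α₄`.
-/

open Polynomial Finset

section CoeffsPos

variable {R : Type*} [Semiring R]

/-- The coefficient of `X ^ (p.natDegree - k)`: the `αₖ` of the statement, and `0` for
`k > p.natDegree`. -/
noncomputable def revCoeff (p : R[X]) (k : ℕ) : R := p.reverse.coeff k

def CoeffsPos [PartialOrder R] (p : R[X]) : Prop := ∀ k ≤ p.natDegree, 0 < p.coeff k

variable [PartialOrder R] {p q : R[X]}

theorem CoeffsPos.coeff_nonneg (hp : CoeffsPos p) (k : ℕ) : 0 ≤ p.coeff k := by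
  rcases le_or_gt k p.natDegree with hk | hk
  · exact (hp k hk).le
  · rw [coeff_eq_zero_of_natDegree_lt hk]

theorem CoeffsPos.revCoeff_nonneg (hp : CoeffsPos p) (k : ℕ) : 0 ≤ revCoeff p k := by
  rw [revCoeff, coeff_reverse]
  exact hp.coeff_nonneg _

theorem CoeffsPos.revCoeff_pos (hp : CoeffsPos p) {k : ℕ} (hk : k ≤ p.natDegree) :
    0 < revCoeff p k := by
  rw [revCoeff, coeff_reverse, revAt_le hk]
  exact hp _ (Nat.sub_le _ _)

theorem CoeffsPos.mul [IsStrictOrderedRing R] (hp : CoeffsPos p) (hq : CoeffsPos q) :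
    CoeffsPos (p * q) := by
  have hlead : p.leadingCoeff * q.leadingCoeff ≠ 0 := (mul_pos (hp _ le_rfl) (hq _ le_rfl)).ne'
  intro k hk
  rw [natDegree_mul' hlead] at hk
  rw [coeff_mul]
  refine sum_pos' (fun x _ => mul_nonneg (hp.coeff_nonneg _) (hq.coeff_nonneg _)) ?_
  rcases le_or_gt k q.natDegree with hkq | hkq
  · exact ⟨(0, k), by simp, mul_pos (hp 0 (Nat.zero_le _)) (hq k hkq)⟩
  · exact ⟨(k - q.natDegree, q.natDegree), by simp; omega,
      mul_pos (hp _ (by omega)) (hq _ le_rfl)⟩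

end CoeffsPos

section QuadraticMul

variable {R : Type*} [CommSemiring R] (c d : R) (r : R[X])

theorem coeff_one_quadratic_mul :
    ((1 + C c * X + C d * X ^ 2) * r).coeff 1 = r.coeff 1 + c * r.coeff 0 := by
  simp [add_mul, mul_assoc, coeff_X_mul, coeff_X_pow_mul']

theorem coeff_add_two_quadratic_mul (k : ℕ) :
    ((1 + C c * X + C d * X ^ 2) * r).coeff (k + 2) =
      r.coeff (k + 2) + c * r.coeff (k + 1) + d * r.coeff k := by
  simp [add_mul, mul_assoc, coeff_X_mul, coeff_X_pow_mul']

end QuadraticMul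

section MonicOfCoeffs

variable {R : Type*} [Semiring R] {n : ℕ} (a : ℕ → R)

theorem sum_range_C_mul_X_pow_sub_eq :
    ∑ i ∈ range n, C (a (i + 1)) * X ^ (n - 1 - i) = ∑ j ∈ range n, C (a (n - j)) * X ^ j := by
  conv_rhs => rw [← sum_range_reflect]
  refine sum_congr rfl fun i hi => ?_
  rw [show n - (n - 1 - i) = i + 1 by have := mem_range.mp hi; omega]

theorem degree_sum_range_C_mul_X_pow_lt :
    (∑ j ∈ range n, C (a j) * X ^ j).degree < (n : WithBot ℕ) := by
  simpa [Fin.sum_univ_eq_sum_range (fun j => C (a j) * X ^ j)] using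
    degree_sum_fin_lt (fun j : Fin n => a j)

theorem monic_X_pow_add_sum : (X ^ n + ∑ j ∈ range n, C (a j) * X ^ j).Monic :=
  monic_X_pow_add (degree_sum_range_C_mul_X_pow_lt a)

theorem natDegree_X_pow_add_sum [Nontrivial R] :
    (X ^ n + ∑ j ∈ range n, C (a j) * X ^ j).natDegree = n :=
  natDegree_eq_of_degree_eq_some <| by
    rw [degree_add_eq_left_of_degree_lt] <;> simp [degree_sum_range_C_mul_X_pow_lt a]

theorem coeff_X_pow_add_sum {k : ℕ} (hk : k < n) :
    (X ^ n + ∑ j ∈ range n, C (a j) * X ^ j).coeff k = a k := by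
  simp [coeff_X_pow, hk.ne, hk]

end MonicOfCoeffs

def IsHurwitzStable (p : ℝ[X]) : Prop := ∀ z : ℂ, aeval z p = 0 → z.re < 0

theorem IsHurwitzStable.of_dvd {p q : ℝ[X]} (hp : IsHurwitzStable p) (hqp : q ∣ p) :
    IsHurwitzStable q := by
  obtain ⟨r, rfl⟩ := hqp
  exact fun z hz => hp z (by rw [map_mul, hz, zero_mul])

/-- The monic Hurwitz-stable polynomials of degree one and two. -/
def stableFactors : Set ℝ[X] :=
  {f | (∃ b > 0, f = X + C b) ∨ ∃ c > 0, ∃ d > 0, f = X ^ 2 + C c * X + C d}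

section stableFactors

variable {f : ℝ[X]}

theorem natDegree_of_mem_stableFactors (hf : f ∈ stableFactors) :
    f.natDegree = 1 ∨ f.natDegree = 2 := by
  rcases hf with ⟨b, -, rfl⟩ | ⟨c, -, d, -, rfl⟩
  · left; compute_degree!
  · right; compute_degree!

theorem monic_of_mem_stableFactors (hf : f ∈ stableFactors) : f.Monic := by
  rcases hf with ⟨b, -, rfl⟩ | ⟨c, -, d, -, rfl⟩
  · exact monic_X_add_C b
  · rw [add_assoc]
    exact monic_X_pow_add (by compute_degree!)

theorem coeffsPos_of_mem_stableFactors (hf : f ∈ stableFactors) : CoeffsPos f := by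
  intro k hk
  rcases hf with ⟨b, hb, rfl⟩ | ⟨c, hc, d, hd, rfl⟩
  · rw [show (X + C b : ℝ[X]).natDegree = 1 by compute_degree!] at hk
    interval_cases k <;> simp [coeff_X, coeff_C, hb]
  · rw [show (X ^ 2 + C c * X + C d : ℝ[X]).natDegree = 2 by compute_degree!] at hk
    interval_cases k <;> simp [coeff_X, coeff_C, hc, hd]

theorem exists_reverse_eq_of_mem_stableFactors (hf : f ∈ stableFactors) :
    ∃ c > 0, ∃ d ≥ 0, f.reverse = 1 + C c * X + C d * X ^ 2 := by
  rcases hf with ⟨b, hb, rfl⟩ | ⟨c, hc, d, hd, rfl⟩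
  · exact ⟨b, hb, 0, le_rfl, by simp [reverse, reflect_add]⟩
  · refine ⟨c, hc, d, hd.le, ?_⟩
    have hdeg : (X ^ 2 + C c * X + C d).natDegree = 2 := by compute_degree!
    have hX : reflect 2 (X : ℝ[X]) = X := by
      simpa [revAt_le] using reflect_monomial (R := ℝ) 2 1
    rw [reverse, hdeg]
    simp [reflect_add, hX, revAt_le]

end stableFactors

theorem IsHurwitzStable.exists_mem_stableFactors_mul_eq {p : ℝ[X]} (hp : IsHurwitzStable p)
    (hdeg : 0 < p.natDegree) : ∃ f ∈ stableFactors, ∃ q, p = f * q := by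
  obtain ⟨z, hz⟩ := Complex.exists_root (f := p.map (algebraMap ℝ ℂ))
    (by rwa [degree_map, ← natDegree_pos_iff_degree_pos])
  have hza : aeval z p = 0 := by rwa [aeval_def, eval₂_eq_eval_map]
  have hre := hp z hza
  by_cases him : z.im = 0
  · have hz_re : z = algebraMap ℝ ℂ z.re := Complex.ext rfl (by simp [him])
    obtain ⟨q, hq⟩ := dvd_iff_isRoot.mpr (isRoot_of_aeval_algebraMap_eq_zero (hz_re ▸ hza))
    exact ⟨X + C (-z.re), Or.inl ⟨-z.re, by linarith, rfl⟩, q, by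
      rw [hq, map_neg, sub_eq_add_neg]⟩
  · obtain ⟨q, hq⟩ := p.quadratic_dvd_of_aeval_eq_zero_im_ne_zero hza him
    have hz0 : z ≠ 0 := by rintro rfl; simp at hre
    refine ⟨_, Or.inr ⟨-(2 * z.re), by linarith, ‖z‖ ^ 2, by positivity, rfl⟩, q, ?_⟩
    rw [hq, map_neg, sub_eq_add_neg, neg_mul]

structure StableCoeffBounds (p : ℝ[X]) : Prop where
  coeffsPos : CoeffsPos p
  minor_three : revCoeff p 3 ≤ revCoeff p 1 * revCoeff p 2
  minor_five : revCoeff p 5 ≤ revCoeff p 1 * revCoeff p 4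
  minor_five_lt : 5 ≤ p.natDegree → revCoeff p 5 < revCoeff p 1 * revCoeff p 4

theorem stableCoeffBounds_one : StableCoeffBounds 1 := by
  have h (k : ℕ) : revCoeff (1 : ℝ[X]) (k + 1) = 0 := by
    rw [revCoeff, ← C_1, reverse_C, coeff_C_succ]
  exact ⟨fun k hk => by simp_all, by simp [h], by simp [h], by simp⟩

theorem StableCoeffBounds.mul {f q : ℝ[X]} (hf : f ∈ stableFactors) (hq : q.Monic)
    (h : StableCoeffBounds q) : StableCoeffBounds (f * q) := by
  obtain ⟨c, hc, d, hd, hrev⟩ := exists_reverse_eq_of_mem_stableFactors hf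
  set a := revCoeff q
  have ha : ∀ k, 0 ≤ a k := h.coeffsPos.revCoeff_nonneg
  have ha₀ : a 0 = 1 := by rw [← hq.leadingCoeff, ← coeff_zero_reverse]; rfl
  have h₁ : revCoeff (f * q) 1 = a 1 + c := by
    rw [revCoeff, reverse_mul_of_domain, hrev, coeff_one_quadratic_mul]
    change a 1 + c * a 0 = a 1 + c
    rw [ha₀, mul_one]
  have hrec (k : ℕ) : revCoeff (f * q) (k + 2) = a (k + 2) + c * a (k + 1) + d * a k := by
    rw [revCoeff, reverse_mul_of_domain, hrev, coeff_add_two_quadratic_mul]; rfl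
  have h₂ := hrec 0
  have h₃ := hrec 1
  have h₄ := hrec 2
  have h₅ := hrec 3
  simp only [ha₀, mul_one, zero_add, Nat.reduceAdd] at h₂ h₃ h₄ h₅
  have gap₃ : (a 1 + c) * (a 2 + c * a 1 + d) - (a 3 + c * a 2 + d * a 1) =
      (a 1 * a 2 - a 3) + c * a 1 ^ 2 + c ^ 2 * a 1 + c * d := by ring
  have gap₅ : (a 1 + c) * (a 4 + c * a 3 + d * a 2) - (a 5 + c * a 4 + d * a 3) =
      (a 1 * a 4 - a 5) + d * (a 1 * a 2 - a 3) + c * a 1 * a 3 + c * d * a 2 + c ^ 2 * a 3 := by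
    ring
  have gap₅_nonneg_rest :
      0 ≤ (a 1 * a 4 - a 5) + d * (a 1 * a 2 - a 3) + c * a 1 * a 3 + c * d * a 2 := by
    linarith [sub_nonneg.2 h.minor_five, mul_nonneg hd (sub_nonneg.2 h.minor_three),
      mul_nonneg (mul_nonneg hc.le (ha 1)) (ha 3), mul_nonneg (mul_nonneg hc.le hd) (ha 2)]
  refine ⟨(coeffsPos_of_mem_stableFactors hf).mul h.coeffsPos, ?_, ?_, fun hdeg₅ => ?_⟩
  · rw [h₁, h₂, h₃, ← sub_nonneg, gap₃]
    linarith [sub_nonneg.2 h.minor_three, mul_nonneg hc.le (sq_nonneg (a 1)),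
      mul_nonneg (sq_nonneg c) (ha 1), mul_nonneg hc.le hd]
  · rw [h₁, h₄, h₅, ← sub_nonneg, gap₅]
    linarith [mul_nonneg (sq_nonneg c) (ha 3)]
  · have hdeg := (monic_of_mem_stableFactors hf).natDegree_mul hq
    have a₃ : 0 < a 3 :=
      h.coeffsPos.revCoeff_pos (by have := natDegree_of_mem_stableFactors hf; omega)
    rw [h₁, h₄, h₅, ← sub_pos, gap₅]
    linarith [mul_pos (pow_pos hc 2) a₃]

theorem IsHurwitzStable.stableCoeffBounds {p : ℝ[X]} (hm : p.Monic) (hp : IsHurwitzStable p) :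
    StableCoeffBounds p := by
  induction hn : p.natDegree using Nat.strong_induction_on generalizing p with
  | _ n ih =>
  rcases Nat.eq_zero_or_pos n with rfl | hpos
  · rw [hm.natDegree_eq_zero.mp hn]
    exact stableCoeffBounds_one
  obtain ⟨f, hf, q, rfl⟩ := hp.exists_mem_stableFactors_mul_eq (hn ▸ hpos)
  have hfm := monic_of_mem_stableFactors hf
  have hq := hfm.of_mul_monic_left hm
  refine StableCoeffBounds.mul hf hq (ih q.natDegree ?_ hq (hp.of_dvd (dvd_mul_left q f)) rfl)
  have := natDegree_of_mem_stableFactors hf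
  rw [← hn, hfm.natDegree_mul hq]
  omega

theorem unstable_of_ineqs_general (n : ℕ) (hn : 5 ≤ n) (α : ℕ → ℝ)
    (h5 : 0 ≤ α 5 - α 1 * α 4) :
    ∃ z : ℂ, aeval z (X ^ n + ∑ i ∈ Finset.range n, C (α (i + 1)) * X ^ (n - 1 - i)) = 0
      ∧ 0 ≤ z.re := by
  rw [sum_range_C_mul_X_pow_sub_eq]
  set p := X ^ n + ∑ j ∈ range n, C (α (n - j)) * X ^ j
  by_contra! hstable
  have hdeg : p.natDegree = n := natDegree_X_pow_add_sum _
  have hcoeff {k : ℕ} (hk₀ : 0 < k) (hkn : k ≤ n) : revCoeff p k = α k := by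
    rw [revCoeff, coeff_reverse, hdeg, revAt_le hkn, coeff_X_pow_add_sum _ (by omega)]
    congr 1; omega
  have hlt := (IsHurwitzStable.stableCoeffBounds (monic_X_pow_add_sum _) hstable).minor_five_lt
    (hdeg.symm ▸ hn)
  rw [hcoeff (by norm_num) (by omega), hcoeff (by norm_num) (by omega),
    hcoeff (by norm_num) (by omega)] at hlt
  linarith

theorem unstable_of_ineqs (n : ℕ) (hn : 5 ≤ n) (α : ℕ → ℝ)
    (hconv : ∀ k, n < k → α k = 0)
    (h5 : 0 ≤ α 5 - α 1 * α 4) (h7 : 0 ≤ α 7 - α 1 * α 6) :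
    ∃ z : ℂ, aeval z (X ^ n + ∑ i ∈ Finset.range n, C (α (i + 1)) * X ^ (n - 1 - i)) = 0
      ∧ 0 ≤ z.re :=
  unstable_of_ineqs_general n hn α h5
end

section
/- Let p(s) = s^5 + α1·s^4 + α2·s^3 + α3·s^2 + α4·s + α5 be a monic real polynomial of degree five. If α5 - α1·α4 ≥ 0, then p is Hurwitz unstable, i.e., p has a complex root with nonnegative real part. Equivalently, if p is Hurwitz stable then α5 < α1·α4. -/
/-!
A Hurwitz stable real polynomial has positive coefficients (Stodola): each complex root `z`
contributes a real factor `X - z` or `X² - 2 Re z X + |z|²` with positive coefficients, and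
positivity of all coefficients up to the degree is preserved under products.

A real polynomial `p` of odd degree `n ≥ 3` has a real root `x`, which is negative when `p` is
stable. Writing `p = (X - x) q`, with `q` stable and so with positive coefficients `qᵢ`, the
coefficients `aᵢ` of `p` satisfy
`a_{n-1} a₁ - a₀ = q_{n-2} q₀ - x q_{n-2} q₁ + x² q₁ > 0`.
-/

open Polynomial

namespace Polynomial

def IsHurwitzStable (p : ℝ[X]) : Prop :=
  ∀ z : ℂ, aeval z p = 0 → z.re < 0

def HasPosCoeffs {R : Type*} [Semiring R] [PartialOrder R] (p : R[X]) : Prop :=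
  ∀ i ≤ p.natDegree, 0 < p.coeff i

section HasPosCoeffs

variable {R : Type*} [Semiring R] [PartialOrder R] {p q : R[X]}

lemma HasPosCoeffs.coeff_nonneg (hp : HasPosCoeffs p) (i : ℕ) : 0 ≤ p.coeff i := by
  rcases le_or_gt i p.natDegree with hi | hi
  · exact (hp i hi).le
  · rw [coeff_eq_zero_of_natDegree_lt hi]

lemma HasPosCoeffs.mul [IsStrictOrderedRing R] (hp : HasPosCoeffs p) (hq : HasPosCoeffs q) :
    HasPosCoeffs (p * q) := by
  have hdeg : (p * q).natDegree = p.natDegree + q.natDegree :=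
    natDegree_mul' (mul_pos (hp _ le_rfl) (hq _ le_rfl)).ne'
  intro k hk
  rw [hdeg] at hk
  rw [coeff_mul]
  refine Finset.sum_pos' (fun x _ ↦ mul_nonneg (hp.coeff_nonneg _) (hq.coeff_nonneg _))
    ⟨(min k p.natDegree, k - min k p.natDegree), by simp, ?_⟩
  exact mul_pos (hp _ (min_le_right _ _)) (hq _ (by omega))

end HasPosCoeffs

lemma hasPosCoeffs_X_sub_C {a : ℝ} (ha : a < 0) : HasPosCoeffs (X - C a) := by
  intro i hi
  rw [natDegree_X_sub_C] at hi
  interval_cases i <;> simp [ha]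

lemma hasPosCoeffs_X_sq_sub_C_mul_X_add_C {z : ℂ} (hre : z.re < 0) :
    HasPosCoeffs (X ^ 2 - C (2 * z.re) * X + C (‖z‖ ^ 2)) := by
  have hz : z ≠ 0 := fun h ↦ by simp [h] at hre
  intro i hi
  rw [(isMonicOfDegree_sub_add_two _ _).natDegree_eq] at hi
  interval_cases i <;>
    simp only [coeff_add, coeff_sub, coeff_X_pow, coeff_C_mul, coeff_X, coeff_C] <;>
    norm_num [hz]
  linarith

lemma aeval_ofReal_eq_zero_iff {p : ℝ[X]} {x : ℝ} : aeval (x : ℂ) p = 0 ↔ p.IsRoot x := by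
  rw [IsRoot, ← Complex.ofReal_eq_zero]
  exact Eq.congr_left (aeval_ofReal p x)

lemma exists_monic_hasPosCoeffs_dvd_of_aeval_eq_zero (p : ℝ[X]) {z : ℂ} (hz : aeval z p = 0)
    (hre : z.re < 0) : ∃ f : ℝ[X], f.Monic ∧ 0 < f.natDegree ∧ HasPosCoeffs f ∧ f ∣ p := by
  by_cases him : z.im = 0
  · refine ⟨X - C z.re, monic_X_sub_C _, by simp, hasPosCoeffs_X_sub_C hre, ?_⟩
    rw [dvd_iff_isRoot, ← aeval_ofReal_eq_zero_iff]
    convert hz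
    exact Complex.ext rfl (by simp [him])
  · have hq := isMonicOfDegree_sub_add_two (2 * z.re) (‖z‖ ^ 2)
    exact ⟨_, hq.monic, by rw [hq.natDegree_eq]; norm_num,
      hasPosCoeffs_X_sq_sub_C_mul_X_add_C hre, quadratic_dvd_of_aeval_eq_zero_im_ne_zero p hz him⟩

lemma IsHurwitzStable.of_dvd {p q : ℝ[X]} (hp : IsHurwitzStable p) (hq : q ∣ p) :
    IsHurwitzStable q := by
  obtain ⟨r, rfl⟩ := hq
  intro z hz
  exact hp z (by rw [aeval_mul, hz, zero_mul])

theorem IsHurwitzStable.hasPosCoeffs {p : ℝ[X]} (hp : IsHurwitzStable p) (hm : p.Monic) :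
    HasPosCoeffs p := by
  induction hn : p.natDegree using Nat.strong_induction_on generalizing p with
  | _ n ih =>
  rcases Nat.eq_zero_or_pos n with rfl | hpos
  · rw [hm.natDegree_eq_zero.mp hn]
    intro i hi
    rw [natDegree_one, Nat.le_zero] at hi
    simp [hi]
  obtain ⟨z, hz⟩ := IsAlgClosed.exists_aeval_eq_zero ℂ p (by
    rw [degree_eq_natDegree hm.ne_zero]; exact_mod_cast (hn ▸ hpos).ne')
  obtain ⟨f, hf, hfdeg, hfpos, q, rfl⟩ :=
    exists_monic_hasPosCoeffs_dvd_of_aeval_eq_zero _ hz (hp z hz)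
  have hqm : q.Monic := hf.of_mul_monic_left hm
  have hqdeg : q.natDegree < n := by
    rw [← hn, hf.natDegree_mul hqm]; omega
  exact hfpos.mul (ih _ hqdeg (hp.of_dvd (dvd_mul_left q f)) hqm rfl)

lemma IsMonicOfDegree.exists_isRoot_of_odd {f : ℝ[X]} {n : ℕ} (hf : IsMonicOfDegree f n)
    (hn : Odd n) : ∃ x, f.IsRoot x := by
  obtain ⟨m, rfl⟩ := hn
  induction m generalizing f with
  | zero =>
    obtain ⟨r, rfl⟩ := isMonicOfDegree_one_iff.mp hf
    exact ⟨-r, by simp⟩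
  | succ m ih =>
    obtain ⟨f₁, f₂, hf₁ | hf₁, rfl⟩ := hf.eq_isMonicOfDegree_one_or_two_mul
    · obtain ⟨r, rfl⟩ := isMonicOfDegree_one_iff.mp hf₁
      exact ⟨-r, by simp⟩
    · have hdeg : 2 * (m + 1) + 1 = 2 + (2 * m + 1) := by ring
      obtain ⟨x, hx⟩ := ih (hf₁.of_mul_left (hdeg ▸ hf))
      exact ⟨x, by simp [IsRoot, hx.eq_zero]⟩

theorem IsHurwitzStable.coeff_zero_lt_mul {p : ℝ[X]} {m : ℕ} (hp : IsHurwitzStable p)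
    (hdeg : IsMonicOfDegree p (2 * m + 3)) : p.coeff 0 < p.coeff (2 * m + 2) * p.coeff 1 := by
  obtain ⟨x, hx⟩ := hdeg.exists_isRoot_of_odd ⟨m + 1, by ring⟩
  have hx0 : x < 0 := by simpa using hp x (aeval_ofReal_eq_zero_iff.mpr hx)
  obtain ⟨q, hpq⟩ := dvd_iff_isRoot.mpr hx
  rw [mul_comm] at hpq
  have hq : IsMonicOfDegree q (2 * m + 2) :=
    (isMonicOfDegree_X_sub_one x).of_mul_right (hpq ▸ hdeg)
  have hqpos : ∀ i ≤ 2 * m + 2, 0 < q.coeff i :=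
    hq.natDegree_eq ▸ (hp.of_dvd (Dvd.intro _ hpq.symm)).hasPosCoeffs hq.monic
  have hq0 := hqpos 0 (by omega)
  have hq1 := hqpos 1 (by omega)
  have hq2 := hqpos (2 * m + 1) (by omega)
  have hlead : q.coeff (2 * m + 2) = 1 := ((isMonicOfDegree_iff _ _).mp hq).2
  rw [hpq, mul_coeff_zero, coeff_mul_X_sub_C, coeff_mul_X_sub_C, hlead]
  simp only [coeff_sub, coeff_X_zero, coeff_C_zero, zero_sub, one_mul, zero_add]
  nlinarith [mul_pos hq2 hq0, mul_pos (mul_pos hq2 hq1) (neg_pos.mpr hx0),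
    mul_pos (mul_pos (neg_pos.mpr hx0) (neg_pos.mpr hx0)) hq1]

end Polynomial

theorem unstable_deg5_of_ineq (α1 α2 α3 α4 α5 : ℝ)
    (h : 0 ≤ α5 - α1 * α4) :
    ∃ z : ℂ, aeval z (X ^ 5 + C α1 * X ^ 4 + C α2 * X ^ 3 + C α3 * X ^ 2
        + C α4 * X + C α5) = 0 ∧ 0 ≤ z.re := by
  by_contra! hstable
  have hdeg : IsMonicOfDegree (X ^ 5 + C α1 * X ^ 4 + C α2 * X ^ 3 + C α3 * X ^ 2
      + C α4 * X + C α5) 5 := ⟨by compute_degree!, by monicity!⟩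
  have : α5 < α1 * α4 := by
    simpa [coeff_X, coeff_C] using IsHurwitzStable.coeff_zero_lt_mul (m := 1) hstable hdeg
  linarith
end

section
/- Let n ≥ 5 and let p(s) = s^n + α1·s^{n-1} + α2·s^{n-2} + α3·s^{n-3} + s^{n-4} + α5·s^{n-5} + ... + αn be a monic real polynomial whose coefficient of s^{n-4} equals 1, with the convention αk = 0 for k > n. If 0 < α2 ≤ 2 and α7 - α1·α6 ≥ 0, then p is Hurwitz unstable, i.e., p has a complex root with nonnegative real part. -/
/-!
A monic real polynomial whose roots all lie in the open left half-plane factors into linear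
factors `X + a` and quadratic factors `X ^ 2 + b X + c` with `a, b, c > 0`. The coefficient `αₖ`
of `s ^ (n - k)` is the `k`-th coefficient of the reversed polynomial, on which these factors act
as multiplication by `1 + a X` and `1 + b X + c X ^ 2`. A few inequalities on the `αₖ` survive
these multiplications: positivity, `α_{2k+3} < α₁ α_{2k+2}` as long as `2k + 2 ≤ n`, and in
degrees 4 and 5 the inequalities `α₃ ^ 2 + α₁ ^ 2 α₄ < α₁ α₂ α₃` and `4 α₄ < α₂ ^ 2`. For `n = 5`
the last one contradicts `α₄ = 1`, `α₂ ≤ 2`; for `n ≥ 6` the second one at `k = 2` contradicts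
`α₇ ≥ α₁ α₆`.
-/

open Polynomial

namespace Polynomial

section Reverse

variable {R : Type*} [CommSemiring R] [Nontrivial R]

lemma reverse_X_add_C (a : R) : (X + C a).reverse = 1 + C a * X := by
  have h := reverse_mul_X (1 : R[X])
  rw [one_mul, ← C_1, reverse_C] at h
  simp [h]

lemma reverse_X_sq_add_C_mul_X_add_C (b c : R) :
    (X ^ 2 + C b * X + C c).reverse = 1 + C b * X + C c * X ^ 2 := by
  have h : (X ^ 2 + C b * X : R[X]) = (X + C b) * X := by ring
  have hdeg : (X ^ 2 + C b * X : R[X]).natDegree = 2 := by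
    simpa using (isMonicOfDegree_add_add_two b (0 : R)).natDegree_eq
  rw [reverse_add_C, hdeg, h, reverse_mul_X, reverse_X_add_C]

end Reverse

section CoeffMul

variable {R : Type*} [Semiring R] (a b c : R) (f : R[X]) (k : ℕ)

lemma coeff_one_add_C_mul_X_mul_zero : ((1 + C a * X) * f).coeff 0 = f.coeff 0 := by
  simp [add_mul, mul_assoc]

lemma coeff_one_add_C_mul_X_mul_succ :
    ((1 + C a * X) * f).coeff (k + 1) = f.coeff (k + 1) + a * f.coeff k := by
  simp [add_mul, mul_assoc, coeff_X_mul]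

lemma coeff_one_add_C_mul_X_add_C_mul_X_sq_mul_zero :
    ((1 + C b * X + C c * X ^ 2) * f).coeff 0 = f.coeff 0 := by
  simp [add_mul, mul_assoc]

lemma coeff_one_add_C_mul_X_add_C_mul_X_sq_mul_one :
    ((1 + C b * X + C c * X ^ 2) * f).coeff 1 = f.coeff 1 + b * f.coeff 0 := by
  simp [add_mul, mul_assoc, coeff_X_pow_mul']

lemma coeff_one_add_C_mul_X_add_C_mul_X_sq_mul_add_two :
    ((1 + C b * X + C c * X ^ 2) * f).coeff (k + 2) =
      f.coeff (k + 2) + b * f.coeff (k + 1) + c * f.coeff k := by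
  simp [add_mul, mul_assoc, coeff_X_mul, coeff_X_pow_mul']

end CoeffMul

structure HurwitzCoeffConditions (f : ℝ[X]) (n : ℕ) : Prop where
  coeff_zero : f.coeff 0 = 1
  coeff_eq_zero : ∀ k, n < k → f.coeff k = 0
  coeff_pos : ∀ k ≤ n, 0 < f.coeff k
  coeff_odd_lt : ∀ k, 2 * k + 2 ≤ n → f.coeff (2 * k + 3) < f.coeff 1 * f.coeff (2 * k + 2)
  of_eq_four : n = 4 →
    f.coeff 3 ^ 2 + f.coeff 1 ^ 2 * f.coeff 4 < f.coeff 1 * f.coeff 2 * f.coeff 3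
  of_eq_five : n = 5 → 4 * f.coeff 4 < f.coeff 2 ^ 2

namespace HurwitzCoeffConditions

variable {f : ℝ[X]} {n : ℕ}

lemma coeff_nonneg (hf : HurwitzCoeffConditions f n) (k : ℕ) : 0 ≤ f.coeff k := by
  rcases le_or_gt k n with hk | hk
  · exact (hf.coeff_pos k hk).le
  · exact (hf.coeff_eq_zero k hk).ge

lemma coeff_odd_le (hf : HurwitzCoeffConditions f n) (k : ℕ) :
    f.coeff (2 * k + 1) ≤ f.coeff 1 * f.coeff (2 * k) := by
  rcases k with _ | k
  · simp [hf.coeff_zero]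
  rcases le_or_gt (2 * k + 2) n with hk | hk
  · exact (hf.coeff_odd_lt k hk).le
  · rw [hf.coeff_eq_zero _ (by omega)]
    exact mul_nonneg (hf.coeff_nonneg 1) (hf.coeff_nonneg _)

lemma one : HurwitzCoeffConditions 1 0 where
  coeff_zero := coeff_one_zero
  coeff_eq_zero k hk := by simp [coeff_one, hk.ne']
  coeff_pos k hk := by simp [Nat.le_zero.mp hk]
  coeff_odd_lt k hk := by omega
  of_eq_four := by omega
  of_eq_five := by omega

lemma mul_one_add_C_mul_X (hf : HurwitzCoeffConditions f n) {a : ℝ} (ha : 0 < a) :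
    HurwitzCoeffConditions ((1 + C a * X) * f) (n + 1) := by
  have hg1 : ((1 + C a * X) * f).coeff 1 = f.coeff 1 + a := by
    rw [coeff_one_add_C_mul_X_mul_succ, hf.coeff_zero, zero_add, mul_one]
  have h1 := hf.coeff_nonneg 1
  refine ⟨?_, fun k hk => ?_, fun k hk => ?_, fun k hk => ?_, fun h => ?_, fun h => ?_⟩
  · rw [coeff_one_add_C_mul_X_mul_zero, hf.coeff_zero]
  · obtain ⟨j, rfl⟩ : ∃ j, k = j + 1 := ⟨k - 1, by omega⟩
    rw [coeff_one_add_C_mul_X_mul_succ, hf.coeff_eq_zero _ (by omega),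
      hf.coeff_eq_zero _ (by omega), mul_zero, add_zero]
  · rcases k with _ | j
    · rw [coeff_one_add_C_mul_X_mul_zero, hf.coeff_zero]
      exact one_pos
    · rw [coeff_one_add_C_mul_X_mul_succ]
      have := hf.coeff_pos j (by omega)
      have := hf.coeff_nonneg (j + 1)
      positivity
  · rw [hg1, coeff_one_add_C_mul_X_mul_succ, coeff_one_add_C_mul_X_mul_succ]
    have hodd := hf.coeff_odd_le (k + 1)
    rw [show 2 * (k + 1) + 1 = 2 * k + 3 by ring, show 2 * (k + 1) = 2 * k + 2 by ring] at hodd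
    have hpos := hf.coeff_pos (2 * k + 1) (by omega)
    nlinarith [mul_pos (mul_pos ha ha) hpos, mul_nonneg (mul_nonneg ha.le h1) hpos.le]
  · obtain rfl : n = 3 := by omega
    simp only [coeff_one_add_C_mul_X_mul_succ, hg1, hf.coeff_eq_zero 4 (by norm_num), zero_add]
    have h13 : f.coeff 3 < f.coeff 1 * f.coeff 2 := hf.coeff_odd_lt 0 (by norm_num)
    have := hf.coeff_pos 2 (by norm_num)
    have := hf.coeff_pos 3 (by norm_num)
    have hpos : 0 < f.coeff 3 + a * f.coeff 2 + a ^ 2 * f.coeff 1 + a ^ 3 := by positivity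
    nlinarith [mul_pos (sub_pos.mpr h13) hpos]
  · obtain rfl : n = 4 := by omega
    simp only [coeff_one_add_C_mul_X_mul_succ]
    have key : 0 < f.coeff 1 ^ 2 *
        ((f.coeff 2 + a * f.coeff 1) ^ 2 - 4 * (f.coeff 4 + a * f.coeff 3)) := by
      nlinarith [sq_nonneg (f.coeff 1 * f.coeff 2 - 2 * f.coeff 3 + a * f.coeff 1 ^ 2),
        hf.of_eq_four rfl]
    exact sub_pos.mp (pos_of_mul_pos_right key (sq_nonneg _))

lemma mul_one_add_C_mul_X_add_C_mul_X_sq (hf : HurwitzCoeffConditions f n) {b c : ℝ}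
    (hb : 0 < b) (hc : 0 < c) :
    HurwitzCoeffConditions ((1 + C b * X + C c * X ^ 2) * f) (n + 2) := by
  have hg1 : ((1 + C b * X + C c * X ^ 2) * f).coeff 1 = f.coeff 1 + b := by
    rw [coeff_one_add_C_mul_X_add_C_mul_X_sq_mul_one, hf.coeff_zero, mul_one]
  have h1 := hf.coeff_nonneg 1
  refine ⟨?_, fun k hk => ?_, fun k hk => ?_, fun k hk => ?_, fun h => ?_, fun h => ?_⟩
  · rw [coeff_one_add_C_mul_X_add_C_mul_X_sq_mul_zero, hf.coeff_zero]
  · obtain ⟨j, rfl⟩ : ∃ j, k = j + 2 := ⟨k - 2, by omega⟩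
    rw [coeff_one_add_C_mul_X_add_C_mul_X_sq_mul_add_two, hf.coeff_eq_zero _ (by omega),
      hf.coeff_eq_zero _ (by omega), hf.coeff_eq_zero _ (by omega)]
    ring
  · rcases k with _ | _ | j
    · rw [coeff_one_add_C_mul_X_add_C_mul_X_sq_mul_zero, hf.coeff_zero]
      exact one_pos
    · rw [hg1]
      positivity
    · rw [coeff_one_add_C_mul_X_add_C_mul_X_sq_mul_add_two]
      have := hf.coeff_pos j (by omega)
      have := hf.coeff_nonneg (j + 1)
      have := hf.coeff_nonneg (j + 2)
      positivity
  · rw [show 2 * k + 3 = 2 * k + 1 + 2 by ring, coeff_one_add_C_mul_X_add_C_mul_X_sq_mul_add_two,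
      coeff_one_add_C_mul_X_add_C_mul_X_sq_mul_add_two, hg1]
    have hodd := hf.coeff_odd_le (k + 1)
    rw [show 2 * (k + 1) + 1 = 2 * k + 1 + 2 by ring, show 2 * (k + 1) = 2 * k + 2 by ring] at hodd
    have hodd' := hf.coeff_odd_le k
    have hpos := hf.coeff_pos (2 * k) (by omega)
    have := hf.coeff_nonneg (2 * k + 1)
    nlinarith [mul_pos (mul_pos hb hc) hpos, mul_nonneg (mul_nonneg hb.le h1) this,
      mul_nonneg (mul_nonneg hb.le hb.le) this, mul_nonneg hc.le (sub_nonneg.mpr hodd')]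
  · obtain rfl : n = 2 := by omega
    simp only [coeff_one_add_C_mul_X_add_C_mul_X_sq_mul_add_two, hg1, hf.coeff_zero,
      hf.coeff_eq_zero 3 (by norm_num), hf.coeff_eq_zero 4 (by norm_num), zero_add,
      Nat.reduceAdd, mul_zero, mul_one]
    have := hf.coeff_pos 1 (by norm_num)
    have := hf.coeff_pos 2 (by norm_num)
    set f₁ := f.coeff 1
    set f₂ := f.coeff 2
    have key : (f₁ + b) * (f₂ + b * f₁ + c) * (b * f₂ + c * f₁) - (b * f₂ + c * f₁) ^ 2
        - (f₁ + b) ^ 2 * (c * f₂) = b * f₁ * ((c - f₂) ^ 2 + (b + f₁) * (b * f₂ + c * f₁)) := by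
      ring
    have : 0 < b * f₁ * ((c - f₂) ^ 2 + (b + f₁) * (b * f₂ + c * f₁)) := by positivity
    linarith
  · obtain rfl : n = 3 := by omega
    simp only [coeff_one_add_C_mul_X_add_C_mul_X_sq_mul_add_two, hf.coeff_zero,
      hf.coeff_eq_zero 4 (by norm_num)]
    have h13 : f.coeff 3 < f.coeff 1 * f.coeff 2 := hf.coeff_odd_lt 0 (by norm_num)
    nlinarith [sq_nonneg (c - f.coeff 2 + b * f.coeff 1), mul_pos hb (sub_pos.mpr h13)]

end HurwitzCoeffConditions

lemma exists_aeval_X_sq_add_eq_zero_re_nonneg {b c : ℝ} (h : b ≤ 0 ∨ c ≤ 0) :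
    ∃ z : ℂ, aeval z (X ^ 2 + C b * X + C c) = 0 ∧ 0 ≤ z.re := by
  simp only [map_add, map_mul, map_pow, aeval_X, aeval_C, Complex.coe_algebraMap]
  rcases le_or_gt 0 (b ^ 2 - 4 * c) with hd | hd
  · have hsq := Real.sq_sqrt hd
    refine ⟨((-b + √(b ^ 2 - 4 * c)) / 2 : ℝ), by norm_cast; linear_combination hsq / 4, ?_⟩
    have : b ≤ √(b ^ 2 - 4 * c) := by
      rcases h with hb | hc
      · linarith [Real.sqrt_nonneg (b ^ 2 - 4 * c)]
      · exact (le_abs_self b).trans (Real.abs_le_sqrt (by linarith))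
    simp only [Complex.ofReal_re]
    linarith
  · have hb : b ≤ 0 := h.resolve_right (by nlinarith)
    obtain ⟨s, hsq⟩ : ∃ s : ℝ, s ^ 2 = 4 * c - b ^ 2 := ⟨_, Real.sq_sqrt (by linarith)⟩
    refine ⟨⟨-b / 2, s / 2⟩, ?_, by simp only; linarith⟩
    apply Complex.ext <;> simp [sq] <;> linarith

namespace IsHurwitzStable

lemma of_mul_left {p q : ℝ[X]} (h : (p * q).IsHurwitzStable) : p.IsHurwitzStable :=
  fun z hz => h z (by rw [map_mul, hz, zero_mul])

lemma of_mul_right {p q : ℝ[X]} (h : (p * q).IsHurwitzStable) : q.IsHurwitzStable :=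
  fun z hz => h z (by rw [map_mul, hz, mul_zero])

lemma pos_of_X_add_C {a : ℝ} (h : (X + C a).IsHurwitzStable) : 0 < a := by
  simpa using h (-a : ℝ) (by simp)

lemma pos_of_X_sq_add {b c : ℝ} (h : (X ^ 2 + C b * X + C c).IsHurwitzStable) :
    0 < b ∧ 0 < c := by
  by_contra! hbc
  obtain ⟨z, hz, hre⟩ := exists_aeval_X_sq_add_eq_zero_re_nonneg <|
    (le_or_gt b 0).imp_right hbc
  exact (h z hz).not_ge hre

theorem induction_on {P : ℝ[X] → ℕ → Prop} (one : P 1 0)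
    (linear : ∀ a q n, 0 < a → P q n → P ((X + C a) * q) (n + 1))
    (quadratic : ∀ b c q n, 0 < b → 0 < c → P q n → P ((X ^ 2 + C b * X + C c) * q) (n + 2))
    {p : ℝ[X]} {n : ℕ} (hp : p.IsMonicOfDegree n) (hs : p.IsHurwitzStable) : P p n := by
  induction n using Nat.strong_induction_on generalizing p with
  | _ n ih =>
  rcases n with _ | m
  · rw [isMonicOfDegree_zero_iff.mp hp]
    exact one
  obtain ⟨f, q, hf, rfl⟩ := hp.eq_isMonicOfDegree_one_or_two_mul
  have hq : q.IsMonicOfDegree q.natDegree :=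
    ⟨rfl, (hf.elim (·.monic) (·.monic)).of_mul_monic_left hp.monic⟩
  rcases hf with hf | hf
  · obtain ⟨a, rfl⟩ := isMonicOfDegree_one_iff.mp hf
    have hm : m + 1 = q.natDegree + 1 := by
      rw [← hp.natDegree_eq, (hf.mul hq).natDegree_eq, add_comm]
    rw [hm]
    exact linear a q _ hs.of_mul_left.pos_of_X_add_C (ih _ (by omega) hq hs.of_mul_right)
  · obtain ⟨b, c, rfl⟩ := isMonicOfDegree_two_iff.mp hf
    have hm : m + 1 = q.natDegree + 2 := by
      rw [← hp.natDegree_eq, (hf.mul hq).natDegree_eq, add_comm]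
    obtain ⟨hb, hc⟩ := hs.of_mul_left.pos_of_X_sq_add
    rw [hm]
    exact quadratic b c q _ hb hc (ih _ (by omega) hq hs.of_mul_right)

theorem hurwitzCoeffConditions_reverse {p : ℝ[X]} {n : ℕ} (hp : p.IsMonicOfDegree n)
    (hs : p.IsHurwitzStable) : p.reverse.HurwitzCoeffConditions n :=
  hs.induction_on (P := fun p n => p.reverse.HurwitzCoeffConditions n)
    (by rw [← C_1, reverse_C, C_1]; exact HurwitzCoeffConditions.one)
    (fun a q n ha hq => by
      rw [reverse_mul_of_domain, reverse_X_add_C]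
      exact hq.mul_one_add_C_mul_X ha)
    (fun b c q n hb hc hq => by
      rw [reverse_mul_of_domain, reverse_X_sq_add_C_mul_X_add_C]
      exact hq.mul_one_add_C_mul_X_add_C_mul_X_sq hb hc)
    hp

end IsHurwitzStable

section SumForm

variable {R : Type*} [Semiring R]

lemma isMonicOfDegree_X_pow_add_sum [Nontrivial R] (n : ℕ) (α : ℕ → R) :
    (X ^ n + ∑ i ∈ Finset.range n, C (α (i + 1)) * X ^ (n - 1 - i)).IsMonicOfDegree n := by
  have hlt : (∑ i ∈ Finset.range n, C (α (i + 1)) * X ^ (n - 1 - i)).degree <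
      (X ^ n : R[X]).degree := by
    rw [degree_X_pow]
    refine (degree_sum_le _ _).trans_lt ((Finset.sup_lt_iff (by simp)).2 ?_)
    intro i hi
    rw [Finset.mem_range] at hi
    exact (degree_C_mul_X_pow_le _ _).trans_lt (by exact_mod_cast (show n - 1 - i < n by omega))
  refine ⟨natDegree_eq_of_degree_eq_some ?_, (monic_X_pow n).add_of_left hlt⟩
  rw [degree_add_eq_left_of_degree_lt hlt, degree_X_pow]

lemma coeff_X_pow_add_sum_sub {n k : ℕ} (α : ℕ → R) (hk : 1 ≤ k) (hkn : k ≤ n) :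
    (X ^ n + ∑ i ∈ Finset.range n, C (α (i + 1)) * X ^ (n - 1 - i)).coeff (n - k) = α k := by
  rw [coeff_add, coeff_X_pow, if_neg (by omega), zero_add, finsetSum_coeff,
    Finset.sum_eq_single_of_mem (k - 1) (Finset.mem_range.2 (by omega))]
  · rw [coeff_C_mul_X_pow, if_pos (by omega), Nat.sub_add_cancel hk]
  · intro i hi hne
    rw [coeff_C_mul_X_pow, if_neg (by simp only [Finset.mem_range] at hi; omega)]

lemma coeff_reverse_X_pow_add_sum [Nontrivial R] {n : ℕ} {α : ℕ → R}
    (hα : ∀ k, n < k → α k = 0) {k : ℕ} (hk : 1 ≤ k) :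
    (X ^ n + ∑ i ∈ Finset.range n, C (α (i + 1)) * X ^ (n - 1 - i)).reverse.coeff k = α k := by
  have hdeg := (isMonicOfDegree_X_pow_add_sum n α).natDegree_eq
  rw [coeff_reverse, hdeg]
  rcases le_or_gt k n with hkn | hkn
  · rw [revAt_le hkn, coeff_X_pow_add_sum_sub α hk hkn]
  · rw [revAt_eq_self_of_lt hkn, hα k hkn]
    exact coeff_eq_zero_of_natDegree_lt (by rwa [hdeg])

end SumForm

end Polynomial

theorem unstable_alpha4_one (n : ℕ) (hn : 5 ≤ n) (α : ℕ → ℝ)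
    (hα4 : α 4 = 1)
    (hconv : ∀ k, n < k → α k = 0)
    (hα2 : 0 < α 2) (hα2' : α 2 ≤ 2)
    (h7 : 0 ≤ α 7 - α 1 * α 6) :
    ∃ z : ℂ, aeval z (X ^ n + ∑ i ∈ Finset.range n, C (α (i + 1)) * X ^ (n - 1 - i)) = 0
      ∧ 0 ≤ z.re := by
  by_contra! hstable
  have hf := IsHurwitzStable.hurwitzCoeffConditions_reverse
    (isMonicOfDegree_X_pow_add_sum n α) hstable
  have hcoeff {k : ℕ} (hk : 1 ≤ k) := coeff_reverse_X_pow_add_sum hconv hk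
  rcases (by omega : n = 5 ∨ 6 ≤ n) with rfl | h6
  · have h5 := hf.of_eq_five rfl
    rw [hcoeff (by norm_num), hcoeff (by norm_num), hα4] at h5
    nlinarith
  · have h7' := hf.coeff_odd_lt 2 h6
    rw [hcoeff (by norm_num), hcoeff (by norm_num), hcoeff (by norm_num)] at h7'
    linarith
end

section
/- Let p(s) = s^5 + α1·s^4 + α2·s^3 + α3·s^2 + α4·s + α5 be a monic real polynomial with αi > 0 for i = 1, ..., 5. Assume Δ2 = α1·α2 - α3 > 0, α2² - 4·α4 > 0, α5 ≠ α1·α4, and (α1·α2 - α3)/(α5 - α1·α4) = -α2/(2·α4). Then p is Hurwitz stable, i.e., every complex root of p has negative real part. -/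
open Polynomial

private lemma aux_quad_pos (d e f N r : ℝ) (hd : 0 < d) (hdet : 0 < d * f - e ^ 2)
    (hN : r ^ 2 ≤ N) : 0 < d * N + e * (2 * r) + f := by
  nlinarith [sq_nonneg (d * r + e), hdet, mul_le_mul_of_nonneg_left hN (mul_pos hd hd).le,
    mul_pos hd hd]

theorem sufficient_cond_stable_deg5 (α1 α2 α3 α4 α5 : ℝ)
    (h1 : 0 < α1) (h2 : 0 < α2) (h3 : 0 < α3) (h4 : 0 < α4) (h5 : 0 < α5)
    (hΔ2 : 0 < α1 * α2 - α3)
    (hdisc : 0 < α2 ^ 2 - 4 * α4)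
    (hne : α5 ≠ α1 * α4)
    (hvertex : (α1 * α2 - α3) / (α5 - α1 * α4) = -α2 / (2 * α4)) :
    ∀ z : ℂ, aeval z (X ^ 5 + C α1 * X ^ 4 + C α2 * X ^ 3 + C α3 * X ^ 2
        + C α4 * X + C α5) = 0 → z.re < 0 := by
  intro z hz
  have hz' : z ^ 5 + (α1:ℂ) * z ^ 4 + (α2:ℂ) * z ^ 3 + (α3:ℂ) * z ^ 2
      + (α4:ℂ) * z + (α5:ℂ) = 0 := by
    simpa [map_add, map_mul, map_pow, aeval_X, aeval_C, Complex.coe_algebraMap] using hz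
  have hden : α5 - α1 * α4 ≠ 0 := sub_ne_zero.mpr hne
  have h2a4 : (2:ℝ) * α4 ≠ 0 := by positivity
  have E : (α1 * α2 - α3) * (2 * α4) = -α2 * (α5 - α1 * α4) :=
    (div_eq_div_iff hden h2a4).mp hvertex
  have hcD : 2 * (α3 * α4 - α2 * α5) = α2 * (α1 * α4 - α5) := by linear_combination -E
  have hD : 0 < α1 * α4 - α5 := by nlinarith [mul_pos hΔ2 h4]
  have hc : 0 < α3 * α4 - α2 * α5 := by nlinarith [mul_pos h2 hD]
  have hid : 4 * α4 * ((α1 * α2 - α3) * (α3 * α4 - α2 * α5) - (α1 * α4 - α5) ^ 2)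
      = (α1 * α4 - α5) ^ 2 * (α2 ^ 2 - 4 * α4) := by
    linear_combination (2 * (α3 * α4 - α2 * α5)) * E + (α2 * (α1 * α4 - α5)) * hcD
  have hdet : 0 < (α1 * α2 - α3) * (α3 * α4 - α2 * α5) - (α1 * α4 - α5) ^ 2 := by
    nlinarith [hid, mul_pos (mul_pos hD hD) hdisc]
  by_contra hre
  push_neg at hre
  have hw : (starRingEnd ℂ z) ^ 5 + (α1:ℂ) * (starRingEnd ℂ z) ^ 4
      + (α2:ℂ) * (starRingEnd ℂ z) ^ 3 + (α3:ℂ) * (starRingEnd ℂ z) ^ 2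
      + (α4:ℂ) * (starRingEnd ℂ z) + (α5:ℂ) = 0 := by
    have := congrArg (starRingEnd ℂ) hz'
    simpa [map_add, map_mul, map_pow, Complex.conj_ofReal] using this
  set w : ℂ := starRingEnd ℂ z with hwdef
  set u : ℂ := z ^ 2 with hudef
  set v : ℂ := w ^ 2 with hvdef
  set G : ℂ := u ^ 2 + (α2:ℂ) * u + (α4:ℂ) with hGdef
  set H : ℂ := (α1:ℂ) * u ^ 2 + (α3:ℂ) * u + (α5:ℂ) with hHdef
  set G' : ℂ := v ^ 2 + (α2:ℂ) * v + (α4:ℂ) with hG'def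
  set H' : ℂ := (α1:ℂ) * v ^ 2 + (α3:ℂ) * v + (α5:ℂ) with hH'def
  have key : H + z * G = 0 := by rw [hHdef, hGdef, hudef]; linear_combination hz'
  have key' : H' + w * G' = 0 := by rw [hH'def, hG'def, hvdef]; linear_combination hw
  have bez : H * G' - H' * G = (u - v) * (((α1:ℂ) * α2 - α3) * (u * v)
      + ((α1:ℂ) * α4 - α5) * (u + v) + ((α3:ℂ) * α4 - (α2:ℂ) * α5)) := by
    rw [hHdef, hGdef, hH'def, hG'def]
    ring
  have huv : u - v = (z - w) * (z + w) := by rw [hudef, hvdef]; ring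
  have main : (z - w) * (G * G' + (z + w) * (((α1:ℂ) * α2 - α3) * (u * v)
      + ((α1:ℂ) * α4 - α5) * (u + v) + ((α3:ℂ) * α4 - (α2:ℂ) * α5))) = 0 := by
    linear_combination -bez + G' * key - G * key'
      - (((α1:ℂ) * α2 - α3) * (u * v) + ((α1:ℂ) * α4 - α5) * (u + v)
        + ((α3:ℂ) * α4 - (α2:ℂ) * α5)) * huv
  have hvu : v = starRingEnd ℂ u := by rw [hvdef, hudef, hwdef, ← map_pow]
  have hG'conj : G' = starRingEnd ℂ G := by
    rw [hG'def, hGdef, hvu]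
    simp [map_add, map_mul, map_pow, Complex.conj_ofReal]
  rcases mul_eq_zero.mp main with hzw | hbr
  · -- z is real: positivity of coefficients gives a contradiction
    have hzeq : z = starRingEnd ℂ z := by
      have := sub_eq_zero.mp hzw
      rwa [hwdef] at this
    have hzx : z = ((z.re : ℝ) : ℂ) := (Complex.conj_eq_iff_re.mp hzeq.symm).symm
    have hz2 := hz'
    rw [hudef] at hz2
    rw [hzx] at hz2
    have hzre : z.re ^ 5 + α1 * z.re ^ 4 + α2 * z.re ^ 3 + α3 * z.re ^ 2
        + α4 * z.re + α5 = 0 := by exact_mod_cast hz2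
    linarith [pow_nonneg hre 5,
      mul_nonneg h1.le (pow_nonneg hre 4), mul_nonneg h2.le (pow_nonneg hre 3),
      mul_nonneg h3.le (pow_nonneg hre 2), mul_nonneg h4.le hre]
  · -- bracket zero: extract a real equation
    have e1 : G * G' = ((Complex.normSq G : ℝ) : ℂ) := by
      rw [hG'conj]; exact Complex.mul_conj G
    have e2 : z + w = ((2 * z.re : ℝ) : ℂ) := by rw [hwdef]; exact Complex.add_conj z
    have e3 : u * v = ((Complex.normSq u : ℝ) : ℂ) := by
      rw [hvu]; exact Complex.mul_conj u
    have e4 : u + v = ((2 * u.re : ℝ) : ℂ) := by rw [hvu]; exact Complex.add_conj u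
    have hbr2 : ((Complex.normSq G + 2 * z.re * ((α1 * α2 - α3) * Complex.normSq u
        + (α1 * α4 - α5) * (2 * u.re) + (α3 * α4 - α2 * α5)) : ℝ) : ℂ) = 0 := by
      push_cast at e1 e2 e3 e4 ⊢
      linear_combination hbr - e1
        - (((α1:ℂ) * α2 - α3) * (u * v) + ((α1:ℂ) * α4 - α5) * (u + v)
          + ((α3:ℂ) * α4 - (α2:ℂ) * α5)) * e2
        - (2 * ((z.re : ℝ) : ℂ)) * ((α1:ℂ) * α2 - α3) * e3
        - (2 * ((z.re : ℝ) : ℂ)) * ((α1:ℂ) * α4 - α5) * e4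
    have hR : Complex.normSq G + 2 * z.re * ((α1 * α2 - α3) * Complex.normSq u
        + (α1 * α4 - α5) * (2 * u.re) + (α3 * α4 - α2 * α5)) = 0 := by
      exact_mod_cast hbr2
    have hNs : u.re ^ 2 ≤ Complex.normSq u := by
      rw [Complex.normSq_apply]; nlinarith [sq_nonneg u.im]
    have hΦpos : 0 < (α1 * α2 - α3) * Complex.normSq u
        + (α1 * α4 - α5) * (2 * u.re) + (α3 * α4 - α2 * α5) :=
      aux_quad_pos _ _ _ _ _ hΔ2 hdet hNs
    rcases hre.eq_or_lt with hx0 | hxpos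
    swap
    · have hpos : 0 < Complex.normSq G + 2 * z.re * ((α1 * α2 - α3) * Complex.normSq u
          + (α1 * α4 - α5) * (2 * u.re) + (α3 * α4 - α2 * α5)) :=
        add_pos_of_nonneg_of_pos (Complex.normSq_nonneg G)
          (mul_pos (by linarith) hΦpos)
      linarith [hR]
    -- z.re = 0 : purely imaginary root
    have hG0 : Complex.normSq G = 0 := by rw [← hx0] at hR; linarith
    have hGz : G = 0 := Complex.normSq_eq_zero.mp hG0
    have hHz : H = 0 := by rw [hGz] at key; simpa using key
    have hu : u = ((-(z.im ^ 2) : ℝ) : ℂ) := by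
      rw [hudef]
      rw [Complex.ext_iff]
      constructor
      · simp [pow_two, Complex.mul_re, ← hx0]
      · simp [pow_two, Complex.mul_im, ← hx0]
    set t : ℝ := -(z.im ^ 2) with htdef
    have hGt : t ^ 2 + α2 * t + α4 = 0 := by
      have h0 : ((t:ℂ)) ^ 2 + (α2:ℂ) * (t:ℂ) + (α4:ℂ) = 0 := by
        rw [← hu, ← hGdef]; exact hGz
      exact_mod_cast h0
    have hHt : α1 * t ^ 2 + α3 * t + α5 = 0 := by
      have h0 : (α1:ℂ) * ((t:ℂ)) ^ 2 + (α3:ℂ) * (t:ℂ) + (α5:ℂ) = 0 := by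
        rw [← hu, ← hHdef]; exact hHz
      exact_mod_cast h0
    have hzero : ((α1 * α2 - α3) * t + (α1 * α4 - α5)) ^ 2
        + ((α1 * α2 - α3) * (α3 * α4 - α2 * α5) - (α1 * α4 - α5) ^ 2) = 0 := by
      linear_combination ((α1 * α2 - α3) * (2 * α1 * t + α3)) * hGt
        - ((α1 * α2 - α3) * (2 * t + α2)) * hHt
    linarith [sq_nonneg ((α1 * α2 - α3) * t + (α1 * α4 - α5)), hdet, hzero]
end
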